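/- arXiv:2406.05666 — 2 statements merged into one kernel-verified Lean document; each statement's English description precedes it below -/
import Mathlib

section
/- Let G: ℝ^m → ℝ be differentiable and H(ψ)-convex, i.e., G(μ) − G(ν) − ⟨∇G(ν), μ−ν⟩ ≥ ψ(μ−ν) for all μ, ν, where ψ(z) = ‖az‖₂^r / r with a > 0, r > 1. Suppose G attains its minimum G* at μ*. Then for all μ: ψ(μ − μ*) ≤ G(μ) − G* ≤ ψ*(∇G(μ)), where ψ* is the Fenchel conjugate of ψ. -/
open RealInnerProductSpace

/-! The lower bound is the H(ψ)-convexity inequality at the minimizer, where the gradient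
vanishes. For the upper bound, H(ψ)-convexity at `μ` gives
`G μ - G μ* ≤ ⟪∇G μ, μ - μ*⟫ - ψ(μ - μ*)`, and the right side is at most the Fenchel
conjugate `ψ*(∇G μ)` by Cauchy–Schwarz followed by Young's inequality with exponents `r` and
`r / (r - 1)`. -/

section

variable {E : Type*} [NormedAddCommGroup E] [InnerProductSpace ℝ E]

theorem IsLocalMin.gradient_eq_zero [CompleteSpace E] {f : E → ℝ} {x : E}
    (h : IsLocalMin f x) : gradient f x = 0 := by
  simp [gradient, h.fderiv_eq_zero]

/-- Fenchel–Young inequality for `ψ z = ‖a • z‖ ^ r / r`; the right side is `ψ* w`. -/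
theorem inner_sub_norm_smul_rpow_div_le {a r : ℝ} (ha : 0 < a) (hr : 1 < r) (w z : E) :
    ⟪w, z⟫ - ‖a • z‖ ^ r / r ≤ ‖(1 / a) • w‖ ^ (r / (r - 1)) * ((r - 1) / r) := by
  set s := ‖(1 / a) • w‖
  set t := ‖a • z‖
  have hconj : (r / (r - 1)).HolderConjugate r := (Real.HolderConjugate.conjExponent hr).symm
  have hst : s * t = ‖w‖ * ‖z‖ := by
    simp only [s, t, norm_smul, Real.norm_eq_abs, abs_of_pos ha, abs_of_pos (one_div_pos.2 ha)]
    field_simp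
  calc ⟪w, z⟫ - t ^ r / r
      ≤ s * t - t ^ r / r := by linarith [real_inner_le_norm w z]
    _ ≤ s ^ (r / (r - 1)) / (r / (r - 1)) := by
        linarith [Real.young_inequality_of_nonneg (a := s) (b := t)
          (norm_nonneg _) (norm_nonneg _) hconj]
    _ = s ^ (r / (r - 1)) * ((r - 1) / r) := by rw [div_div_eq_mul_div, mul_div_assoc]

end

theorem h_convex_bounds_general (m : ℕ) (a r : ℝ) (ha : 0 < a) (hr : 1 < r)
    (G : EuclideanSpace ℝ (Fin m) → ℝ)
    (hconvex : ∀ μ ν : EuclideanSpace ℝ (Fin m),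
      ‖a • (μ - ν)‖ ^ r / r ≤ G μ - G ν - ⟪gradient G ν, μ - ν⟫)
    (μs : EuclideanSpace ℝ (Fin m)) (hmin : ∀ μ, G μs ≤ G μ)
    (μ : EuclideanSpace ℝ (Fin m)) :
    ‖a • (μ - μs)‖ ^ r / r ≤ G μ - G μs ∧
    G μ - G μs ≤ ‖(1 / a) • gradient G μ‖ ^ (r / (r - 1)) * ((r - 1) / r) := by
  have hgrad : gradient G μs = 0 := IsLocalMin.gradient_eq_zero (.of_forall hmin)
  refine ⟨by simpa [hgrad] using hconvex μ μs, ?_⟩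
  have hremainder := hconvex μs μ
  rw [← neg_sub μ μs, smul_neg, norm_neg, inner_neg_right] at hremainder
  linarith [inner_sub_norm_smul_rpow_div_le ha hr (gradient G μ) (μ - μs)]

/-- For `G` that is H(ψ)-convex with `ψ(z) = ‖a•z‖^r/r`, minimized at `μ*`:
`ψ(μ−μ*) ≤ G(μ) − G* ≤ ψ*(∇G(μ))` with `ψ*(w) = ‖w/a‖^{r/(r−1)}·(r−1)/r`
(generalized Polyak–Łojasiewicz inequality). -/
theorem h_convex_bounds (m : ℕ) (a r : ℝ) (ha : 0 < a) (hr : 1 < r)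
    (G : EuclideanSpace ℝ (Fin m) → ℝ) (hG : Differentiable ℝ G)
    (hconvex : ∀ μ ν : EuclideanSpace ℝ (Fin m),
      ‖a • (μ - ν)‖ ^ r / r ≤ G μ - G ν - ⟪gradient G ν, μ - ν⟫)
    (μs : EuclideanSpace ℝ (Fin m)) (hmin : ∀ μ, G μs ≤ G μ)
    (μ : EuclideanSpace ℝ (Fin m)) :
    ‖a • (μ - μs)‖ ^ r / r ≤ G μ - G μs ∧
    G μ - G μs ≤ ‖(1 / a) • gradient G μ‖ ^ (r / (r - 1)) * ((r - 1) / r) :=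
  h_convex_bounds_general m a r ha hr G hconvex μs hmin μ
end

section
/- Let X, Y be random variables on finite sets 𝒳, 𝒴 with joint distribution q, let Φ be a convex function on the probability simplex Δ over 𝒴, and let f: 𝒳 → ℝ^{|𝒴|}. Define the Fenchel–Young loss d_Φ(μ, ν) = Φ(μ) + Φ*(ν) − ⟨μ, ν⟩. Then E_{(X,Y)∼q}[d_Φ(1_Y, f(X))] = Ent_Φ(1_Y|X) + E_X[d_Φ(q_{𝒴|X}, f(X))], where Ent_Φ(1_Y|X) = E_X[E_{Y|X} Φ(1_Y) − Φ(q_{𝒴|X})] and q_{𝒴|x} is the conditional distribution of Y given X = x viewed as a vector in the simplex. -/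
/-!
Since the Fenchel–Young loss is affine in its first argument and `⟨1_y, ν⟩ = ν y`, averaging
`d_Φ(1_y, ν)` over `y ∼ p` only changes the `Φ` term, from `Φ p` to `E_p Φ(1_y)`; the gap is the
generalized entropy of `p`. Applying this to each conditional distribution `q_{𝒴|x}` and weighting
by `q_X(x)` gives the decomposition.
-/

open Finset

section

variable {Y : Type*} [Fintype Y]

/-- The Fenchel–Young loss `d_Φ(μ, ν)`, with `Φs` playing the role of the conjugate `Φ*`. -/
noncomputable def fenchelYoungLoss (Φ Φs : (Y → ℝ) → ℝ) (μ ν : Y → ℝ) : ℝ :=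
  Φ μ + Φs ν - μ ⬝ᵥ ν

theorem mul_div_sum_of_nonneg {w : Y → ℝ} (hw : ∀ y, 0 ≤ w y) (y : Y) :
    (∑ y', w y') * (w y / ∑ y', w y') = w y := by
  rcases eq_or_ne (∑ y', w y') 0 with hs | hs
  · rw [(sum_eq_zero_iff_of_nonneg fun y _ => hw y).mp hs y (mem_univ y), zero_div, mul_zero]
  · exact mul_div_cancel₀ _ hs

variable [DecidableEq Y]

theorem sum_mul_fenchelYoungLoss_single_of_sum_eq_one (Φ Φs : (Y → ℝ) → ℝ) {p : Y → ℝ}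
    (hp : ∑ y, p y = 1) (ν : Y → ℝ) :
    ∑ y, p y * fenchelYoungLoss Φ Φs (Pi.single y 1) ν
      = (∑ y, p y * Φ (Pi.single y 1) - Φ p) + fenchelYoungLoss Φ Φs p ν := by
  have hΦs : ∑ y, p y * Φs ν = Φs ν := by rw [← sum_mul, hp, one_mul]
  simp only [fenchelYoungLoss, single_one_dotProduct, mul_add, mul_sub, sum_add_distrib,
    sum_sub_distrib, hΦs]
  rw [dotProduct]
  ring

/-- Junk division makes `w / ∑ w = 0` when the total mass vanishes, where both sides are `0`. -/
theorem sum_mul_fenchelYoungLoss_single (Φ Φs : (Y → ℝ) → ℝ) {w : Y → ℝ} (hw : ∀ y, 0 ≤ w y)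
    (ν : Y → ℝ) :
    ∑ y, w y * fenchelYoungLoss Φ Φs (Pi.single y 1) ν
      = (∑ y', w y') *
          (∑ y, (w y / ∑ y', w y') * Φ (Pi.single y 1) - Φ (fun y => w y / ∑ y', w y'))
        + (∑ y', w y') * fenchelYoungLoss Φ Φs (fun y => w y / ∑ y', w y') ν := by
  set s := ∑ y', w y'
  have hfactor : ∑ y, w y * fenchelYoungLoss Φ Φs (Pi.single y 1) ν
      = s * ∑ y, w y / s * fenchelYoungLoss Φ Φs (Pi.single y 1) ν := by
    rw [mul_sum]
    exact sum_congr rfl fun y _ => by rw [← mul_assoc, mul_div_sum_of_nonneg hw]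
  rcases eq_or_ne s 0 with hs | hs
  · simp [hfactor, hs]
  · have hp : ∑ y, w y / s = 1 := by rw [← sum_div, div_self hs]
    rw [hfactor, ← mul_add, sum_mul_fenchelYoungLoss_single_of_sum_eq_one Φ Φs hp]

end

theorem fenchel_young_risk_decomposition_general {X Y : Type*} [Fintype X] [Fintype Y]
    [DecidableEq Y]
    (q : X → Y → ℝ) (hq0 : ∀ x y, 0 ≤ q x y)
    (Φ Φs : (Y → ℝ) → ℝ) (f : X → Y → ℝ)
    (dΦ : (Y → ℝ) → (Y → ℝ) → ℝ)
    (hd : ∀ μ ν, dΦ μ ν = Φ μ + Φs ν - ∑ y, μ y * ν y)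
    (onehot : Y → Y → ℝ) (hone : ∀ y y', onehot y y' = if y' = y then 1 else 0)
    (qX : X → ℝ) (hqX : ∀ x, qX x = ∑ y, q x y)
    (cond : X → Y → ℝ) (hcond : ∀ x y, cond x y = q x y / qX x) :
    ∑ x, ∑ y, q x y * dΦ (onehot y) (f x)
      = (∑ x, qX x * ((∑ y, cond x y * Φ (onehot y)) - Φ (cond x)))
        + ∑ x, qX x * dΦ (cond x) (f x) := by
  obtain rfl : dΦ = fenchelYoungLoss Φ Φs := funext₂ hd
  obtain rfl : onehot = fun y => Pi.single y 1 :=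
    funext₂ fun y y' => by rw [hone, Pi.single_apply]
  obtain rfl : qX = fun x => ∑ y, q x y := funext hqX
  obtain rfl : cond = fun x y => q x y / ∑ y', q x y' := funext₂ hcond
  rw [← sum_add_distrib]
  exact sum_congr rfl fun x _ => sum_mul_fenchelYoungLoss_single Φ Φs (hq0 x) (f x)

/-- Decomposition of the expected Fenchel–Young risk into generalized
conditional entropy plus expected distribution fitting error. -/
theorem fenchel_young_risk_decomposition {X Y : Type*} [Fintype X] [Fintype Y]
    [DecidableEq Y]
    (q : X → Y → ℝ) (hq0 : ∀ x y, 0 ≤ q x y) (hq1 : ∑ x, ∑ y, q x y = 1)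
    (Φ Φs : (Y → ℝ) → ℝ) (f : X → Y → ℝ)
    (dΦ : (Y → ℝ) → (Y → ℝ) → ℝ)
    (hd : ∀ μ ν, dΦ μ ν = Φ μ + Φs ν - ∑ y, μ y * ν y)
    (onehot : Y → Y → ℝ) (hone : ∀ y y', onehot y y' = if y' = y then 1 else 0)
    (qX : X → ℝ) (hqX : ∀ x, qX x = ∑ y, q x y)
    (cond : X → Y → ℝ) (hcond : ∀ x y, cond x y = q x y / qX x) :
    ∑ x, ∑ y, q x y * dΦ (onehot y) (f x)
      = (∑ x, qX x * ((∑ y, cond x y * Φ (onehot y)) - Φ (cond x)))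
        + ∑ x, qX x * dΦ (cond x) (f x) :=
  fenchel_young_risk_decomposition_general q hq0 Φ Φs f dΦ hd onehot hone qX hqX cond hcond
end
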